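/- Mrs. Gerber's Lemma application: Let X₁ be a binary random variable, (X₂,U) discrete random variables, and Y = X₁ ⊕ W with W ~ Bern(p), p ∈ (0,1/2), W independent of (X₁, X₂, U). Then H(Y|X₂,U) ≥ h₂( h₂⁻¹(H(X₁|X₂,U)) ∗ p ), where h₂⁻¹ : [0,1] → [0,1/2] is the inverse of binary entropy restricted to [0,1/2] and ∗ is binary convolution. -/

import Mathlib

open Finset

/-- Binary convolution `a ∗ b = a(1-b) + b(1-a)`. -/
noncomputable def bconv (a b : ℝ) : ℝ := a * (1 - b) + b * (1 - a)

/-- Binary entropy (base 2), with the convention `0 · log 0 = 0`. -/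
noncomputable def h2 (x : ℝ) : ℝ := -x * Real.logb 2 x - (1 - x) * Real.logb 2 (1 - x)

/-- Inverse of binary entropy, mapping `[0,1]` to `[0,1/2]`. -/
noncomputable def h2inv (y : ℝ) : ℝ :=
  sSup {r : ℝ | r ∈ Set.Icc (0:ℝ) (1/2) ∧ h2 r ≤ y}

/-- `Bern(s)` pmf on `Bool`. -/
noncomputable def bern (s : ℝ) (b : Bool) : ℝ := if b then s else 1 - s

/-!
For each value `s` of `(X₂,U)`, with `α = P(X₁ = 1 | s)`, one has `H(X₁|s) = h₂(α)` and
`H(Y|s) = h₂(α ∗ p)`. As `h₂(α ∗ p)` depends on `α` only through `h₂(α)`, this is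
`F(H(X₁|s))` for `F(t) = h₂(h₂⁻¹(t) ∗ p)`, and Jensen's inequality for `F` gives the claim.

`F` is convex on `[0,1]`: by Cauchy's mean value theorem a chord slope of `F` is a value of
`(1-2p) L(b ∗ p) / L(b)` at a point `b` that moves right with the chord, where
`L(b) = log((1-b)/b) = h₂'(b) · log 2` is `negLogit`. This ratio increases on `(0,1/2)`:
its derivative has the sign of `ψ(b ∗ p) - (1-2p) ψ(b)` for `ψ(b) = b(1-b) L(b)` (`gerberPsi`),
which is nonnegative because `ψ` is concave on `(0,1/2]`, `ψ(1/2) = 0` and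
`b ∗ p = (1-2p) b + 2p · 1/2`.
-/

open Set

lemma h2_eq_binEntropy_div (x : ℝ) : h2 x = Real.binEntropy x / Real.log 2 := by
  simp only [h2, Real.binEntropy, Real.logb, Real.log_inv]
  field_simp
  ring

lemma h2_zero : h2 0 = 0 := by simp [h2_eq_binEntropy_div]

lemma h2_half : h2 (1/2) = 1 := by
  rw [h2_eq_binEntropy_div, one_div, Real.binEntropy_two_inv, div_self (by positivity)]

lemma h2_one_sub (x : ℝ) : h2 (1 - x) = h2 x := by
  simp only [h2_eq_binEntropy_div, Real.binEntropy_one_sub]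

lemma h2_nonneg {x : ℝ} (h0 : 0 ≤ x) (h1 : x ≤ 1) : 0 ≤ h2 x := by
  rw [h2_eq_binEntropy_div]; exact div_nonneg (Real.binEntropy_nonneg h0 h1) (by positivity)

lemma h2_le_one (x : ℝ) : h2 x ≤ 1 := by
  rw [h2_eq_binEntropy_div, div_le_one (by positivity)]; exact Real.binEntropy_le_log_two

lemma continuous_h2 : Continuous h2 := by
  simp only [funext h2_eq_binEntropy_div]; fun_prop

lemma h2_strictMonoOn : StrictMonoOn h2 (Icc 0 (1/2)) := by
  intro a ha b hb hab
  simp only [h2_eq_binEntropy_div]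
  rw [one_div] at ha hb
  exact div_lt_div_of_pos_right (Real.binEntropy_strictMonoOn ha hb hab) (by positivity)

lemma h2inv_h2 {b : ℝ} (hb : b ∈ Icc (0:ℝ) (1/2)) : h2inv (h2 b) = b := by
  have hset : {r : ℝ | r ∈ Icc (0:ℝ) (1/2) ∧ h2 r ≤ h2 b} = Icc 0 b := by
    ext r
    constructor
    · rintro ⟨hr, hrb⟩
      exact ⟨hr.1, (h2_strictMonoOn.le_iff_le hr hb).1 hrb⟩
    · rintro ⟨hr0, hrb⟩
      have hr : r ∈ Icc (0:ℝ) (1/2) := ⟨hr0, hrb.trans hb.2⟩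
      exact ⟨hr, (h2_strictMonoOn.le_iff_le hr hb).2 hrb⟩
  rw [h2inv, hset, csSup_Icc hb.1]

lemma h2inv_mem_Icc_and_h2_h2inv {t : ℝ} (ht : t ∈ Icc (0:ℝ) 1) :
    h2inv t ∈ Icc (0:ℝ) (1/2) ∧ h2 (h2inv t) = t := by
  have := intermediate_value_Icc (by norm_num : (0:ℝ) ≤ 1/2) continuous_h2.continuousOn
  rw [h2_zero, h2_half] at this
  obtain ⟨b, hb, rfl⟩ := this ht
  rw [h2inv_h2 hb]
  exact ⟨hb, rfl⟩

lemma bconv_eq (x p : ℝ) : bconv x p = (1 - 2 * p) * x + p := by unfold bconv; ring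

lemma bconv_one_sub (x p : ℝ) : bconv (1 - x) p = 1 - bconv x p := by unfold bconv; ring

lemma h2_bconv_h2inv_h2 {a : ℝ} (ha : a ∈ Icc (0:ℝ) 1) (p : ℝ) :
    h2 (bconv (h2inv (h2 a)) p) = h2 (bconv a p) := by
  rcases le_total a (1/2) with h | h
  · rw [h2inv_h2 ⟨ha.1, h⟩]
  · rw [← h2_one_sub a, h2inv_h2 ⟨by linarith [ha.2], by linarith⟩, bconv_one_sub, h2_one_sub]

lemma hasDerivAt_bconv (x p : ℝ) : HasDerivAt (fun y => bconv y p) (1 - 2 * p) x := by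
  simp only [bconv_eq]
  simpa using ((hasDerivAt_id x).const_mul (1 - 2 * p)).add_const p

lemma bconv_mem_Ioc {x p : ℝ} (hx : x ∈ Ioo (0:ℝ) (1/2)) (hp₀ : 0 ≤ p) (hp : p ≤ 1/2) :
    bconv x p ∈ Ioc (0:ℝ) (1/2) := by
  obtain ⟨hx0, hx⟩ := hx
  rw [bconv_eq]
  constructor <;> nlinarith

noncomputable def negLogit (x : ℝ) : ℝ := Real.log (1 - x) - Real.log x

lemma negLogit_nonneg {x : ℝ} (h0 : 0 < x) (h : x ≤ 1/2) : 0 ≤ negLogit x :=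
  sub_nonneg.mpr (Real.log_le_log h0 (by linarith))

lemma negLogit_pos {x : ℝ} (h0 : 0 < x) (h : x < 1/2) : 0 < negLogit x :=
  sub_pos.mpr (Real.log_lt_log h0 (by linarith))

lemma hasDerivAt_negLogit {x : ℝ} (h0 : x ≠ 0) (h1 : x ≠ 1) :
    HasDerivAt negLogit (-(x * (1 - x))⁻¹) x := by
  have h1' : 1 - x ≠ 0 := sub_ne_zero.mpr h1.symm
  have := ((Real.hasDerivAt_log h1').comp x ((hasDerivAt_id x).const_sub 1)).sub
    (Real.hasDerivAt_log h0)
  refine this.congr_deriv ?_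
  field_simp
  ring

lemma hasDerivAt_h2 {x : ℝ} (h0 : x ≠ 0) (h1 : x ≠ 1) :
    HasDerivAt h2 (negLogit x / Real.log 2) x := by
  simp only [funext h2_eq_binEntropy_div]
  exact (Real.hasDerivAt_binEntropy h0 h1).div_const _

noncomputable def gerberPsi (x : ℝ) : ℝ := x * (1 - x) * negLogit x

lemma hasDerivAt_gerberPsi {x : ℝ} (h0 : x ≠ 0) (h1 : x ≠ 1) :
    HasDerivAt gerberPsi ((1 - 2 * x) * negLogit x - 1) x := by
  have h1' : 1 - x ≠ 0 := sub_ne_zero.mpr h1.symm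
  have := ((hasDerivAt_id x).mul ((hasDerivAt_id x).const_sub 1)).mul (hasDerivAt_negLogit h0 h1)
  refine this.congr_deriv ?_
  simp only [Pi.mul_apply, id_eq]
  field_simp
  ring

lemma gerberPsi_half : gerberPsi (1/2) = 0 := by norm_num [gerberPsi, negLogit]

lemma concaveOn_gerberPsi : ConcaveOn ℝ (Ioc 0 (1/2)) gerberPsi := by
  have hne : ∀ y ∈ Ioc (0:ℝ) (1/2), y ≠ 0 ∧ y ≠ 1 := fun y hy =>
    ⟨hy.1.ne', by linarith [hy.2]⟩
  refine concaveOn_of_hasDerivWithinAt2_nonpos (convex_Ioc 0 (1/2))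
    (f' := fun y => (1 - 2 * y) * negLogit y - 1)
    (f'' := fun y => -2 * negLogit y + (1 - 2 * y) * -(y * (1 - y))⁻¹)
    (fun y hy => (hasDerivAt_gerberPsi (hne y hy).1 (hne y hy).2).continuousAt.continuousWithinAt)
    ?_ ?_ ?_ <;> rw [interior_Ioc] <;> intro y hy
  · exact (hasDerivAt_gerberPsi hy.1.ne' (by linarith [hy.2])).hasDerivWithinAt
  · have := ((hasDerivAt_id y).const_mul 2).const_sub 1
    exact ((this.mul (hasDerivAt_negLogit hy.1.ne' (by linarith [hy.2]))).sub_const 1).congr_deriv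
      (by simp only [id_eq]; ring) |>.hasDerivWithinAt
  · have hL := negLogit_nonneg hy.1 hy.2.le
    have : 0 ≤ (1 - 2 * y) * (y * (1 - y))⁻¹ :=
      mul_nonneg (by linarith [hy.2]) (inv_nonneg.mpr (mul_nonneg hy.1.le (by linarith [hy.2])))
    linarith

lemma mul_gerberPsi_le_gerberPsi_bconv {x p : ℝ} (hx : x ∈ Ioc (0:ℝ) (1/2)) (hp₀ : 0 ≤ p)
    (hp : p ≤ 1/2) : (1 - 2 * p) * gerberPsi x ≤ gerberPsi (bconv x p) := by
  have hc : (1 - 2 * p) • x + (2 * p) • (1/2 : ℝ) = bconv x p := by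
    rw [bconv_eq, smul_eq_mul, smul_eq_mul]; ring
  have := concaveOn_gerberPsi.2 hx ⟨by norm_num, le_rfl⟩ (by linarith : 0 ≤ 1 - 2 * p)
    (by linarith : 0 ≤ 2 * p) (by ring)
  rwa [gerberPsi_half, smul_zero, add_zero, smul_eq_mul, hc] at this

lemma monotoneOn_negLogit_bconv_div {p : ℝ} (hp₀ : 0 ≤ p) (hp : p ≤ 1/2) :
    MonotoneOn (fun b => negLogit (bconv b p) / negLogit b) (Ioo 0 (1/2)) := by
  have hderiv : ∀ b ∈ Ioo (0:ℝ) (1/2), HasDerivAt (fun b => negLogit (bconv b p) / negLogit b)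
      ((-(bconv b p * (1 - bconv b p))⁻¹ * (1 - 2 * p) * negLogit b
        - negLogit (bconv b p) * -(b * (1 - b))⁻¹) / negLogit b ^ 2) b := by
    intro b hb
    have hc := bconv_mem_Ioc hb hp₀ hp
    exact ((hasDerivAt_negLogit hc.1.ne' (by linarith [hc.2])).comp b (hasDerivAt_bconv b p)).div
      (hasDerivAt_negLogit hb.1.ne' (by linarith [hb.2])) (negLogit_pos hb.1 hb.2).ne'
  refine monotoneOn_of_deriv_nonneg (convex_Ioo 0 (1/2))
    (fun b hb => (hderiv b hb).continuousAt.continuousWithinAt) ?_ ?_ <;> rw [interior_Ioo]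
  · exact fun b hb => (hderiv b hb).differentiableAt.differentiableWithinAt
  intro b hb
  rw [(hderiv b hb).deriv]
  obtain ⟨hc0, hc⟩ := bconv_mem_Ioc hb hp₀ hp
  have hb' : 0 < b * (1 - b) := mul_pos hb.1 (by linarith [hb.2])
  have hc' : 0 < bconv b p * (1 - bconv b p) := mul_pos hc0 (by linarith)
  have hnum : -(bconv b p * (1 - bconv b p))⁻¹ * (1 - 2 * p) * negLogit b
        - negLogit (bconv b p) * -(b * (1 - b))⁻¹ =
      (gerberPsi (bconv b p) - (1 - 2 * p) * gerberPsi b) /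
        (b * (1 - b) * (bconv b p * (1 - bconv b p))) := by
    have : 1 - b ≠ 0 := by linarith [hb.2]
    have : 1 - bconv b p ≠ 0 := by linarith
    have := hb.1.ne'; have := hc0.ne'
    unfold gerberPsi
    field_simp
    ring
  rw [hnum]
  have := mul_gerberPsi_le_gerberPsi_bconv ⟨hb.1, hb.2.le⟩ hp₀ hp
  exact div_nonneg (div_nonneg (by linarith) (by positivity)) (sq_nonneg _)

lemma exists_slope_h2_bconv_h2inv_eq {p x y : ℝ} (hp₀ : 0 ≤ p) (hp : p ≤ 1/2) (hx : 0 ≤ x)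
    (hxy : x < y) (hy : y ≤ 1) :
    ∃ ξ ∈ Ioo (h2inv x) (h2inv y),
      (h2 (bconv (h2inv y) p) - h2 (bconv (h2inv x) p)) / (y - x) =
        (1 - 2 * p) * (negLogit (bconv ξ p) / negLogit ξ) := by
  obtain ⟨ha, hxa⟩ := h2inv_mem_Icc_and_h2_h2inv ⟨hx, hxy.le.trans hy⟩
  obtain ⟨hb, hyb⟩ := h2inv_mem_Icc_and_h2_h2inv ⟨hx.trans hxy.le, hy⟩
  have hab : h2inv x < h2inv y :=
    h2_strictMonoOn.lt_iff_lt ha hb |>.1 (by rw [hxa, hyb]; exact hxy)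
  have hmem : ∀ ξ ∈ Ioo (h2inv x) (h2inv y), ξ ∈ Ioo (0:ℝ) (1/2) := fun ξ hξ =>
    ⟨ha.1.trans_lt hξ.1, hξ.2.trans_le hb.2⟩
  obtain ⟨ξ, hξ, hcauchy⟩ := exists_ratio_hasDerivAt_eq_ratio_slope
    (fun b => h2 (bconv b p)) (fun ξ => negLogit (bconv ξ p) / Real.log 2 * (1 - 2 * p)) hab
    (continuous_h2.comp (by simp only [bconv_eq]; fun_prop)).continuousOn
    (fun ξ hξ => by
      obtain ⟨hc0, hc⟩ := bconv_mem_Ioc (hmem ξ hξ) hp₀ hp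
      exact (hasDerivAt_h2 hc0.ne' (by linarith)).comp ξ (hasDerivAt_bconv ξ p))
    h2 (fun ξ => negLogit ξ / Real.log 2) continuous_h2.continuousOn
    (fun ξ hξ => hasDerivAt_h2 (hmem ξ hξ).1.ne' (by linarith [(hmem ξ hξ).2]))
  refine ⟨ξ, hξ, ?_⟩
  rw [hxa, hyb] at hcauchy
  have hL := (negLogit_pos (hmem ξ hξ).1 (hmem ξ hξ).2).ne'
  rw [div_eq_iff (by linarith)]
  field_simp at hcauchy ⊢
  linear_combination -hcauchy

theorem convexOn_h2_bconv_h2inv {p : ℝ} (hp₀ : 0 ≤ p) (hp : p ≤ 1/2) :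
    ConvexOn ℝ (Icc 0 1) (fun t => h2 (bconv (h2inv t) p)) := by
  refine convexOn_of_slope_mono_adjacent (convex_Icc 0 1) fun {x y z} hx hz hxy hyz => ?_
  obtain ⟨ξ, hξ, hslope⟩ := exists_slope_h2_bconv_h2inv_eq hp₀ hp hx.1 hxy (hyz.le.trans hz.2)
  obtain ⟨η, hη, hslope'⟩ := exists_slope_h2_bconv_h2inv_eq hp₀ hp (hx.1.trans hxy.le) hyz hz.2
  rw [hslope, hslope']
  have hξ₀ := (h2inv_mem_Icc_and_h2_h2inv hx).1.1
  have hη₁ := (h2inv_mem_Icc_and_h2_h2inv hz).1.2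
  exact mul_le_mul_of_nonneg_left (monotoneOn_negLogit_bconv_div hp₀ hp
    ⟨hξ₀.trans_lt hξ.1, hξ.2.trans hη.1 |>.trans hη.2 |>.trans_le hη₁⟩
    ⟨hξ₀.trans_lt hξ.1 |>.trans hξ.2 |>.trans hη.1, hη.2.trans_le hη₁⟩ (hξ.2.trans hη.1).le)
    (by linarith)

lemma neg_sum_mul_logb_div_sum (q : Bool → ℝ) :
    -(∑ b, q b * Real.logb 2 (q b / ∑ b', q b')) = (∑ b, q b) * h2 (q true / ∑ b, q b) := by
  simp only [Fintype.sum_bool]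
  rcases eq_or_ne (q true + q false) 0 with hm | hm
  · simp [hm]
  · have : 1 - q true / (q true + q false) = q false / (q true + q false) := by
      field_simp; ring
    rw [h2, this]
    field_simp
    ring

lemma neg_sum_mul_logb_xor_bern (q : Bool → ℝ) (p : ℝ) :
    -(∑ y : Bool, (∑ x, q x * bern p (xor x y)) *
        Real.logb 2 ((∑ x, q x * bern p (xor x y)) / ∑ x, q x)) =
      (∑ x, q x) * h2 (bconv (q true / ∑ x, q x) p) := by
  set r : Bool → ℝ := fun y => ∑ x, q x * bern p (xor x y) with hr
  have hr_true : r true = q true * (1 - p) + q false * p := by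
    simp only [hr, Fintype.sum_bool, bern, Bool.xor_self, Bool.false_xor, Bool.false_eq_true,
      if_true, if_false]
  have hsum : ∑ y, r y = ∑ x, q x := by
    simp only [hr, Fintype.sum_bool, bern, Bool.xor_self, Bool.false_xor, Bool.xor_false,
      Bool.false_eq_true, if_true, if_false]
    ring
  rw [← hsum, neg_sum_mul_logb_div_sum r, hsum]
  rcases eq_or_ne (∑ x, q x) 0 with hm | hm
  · rw [hm, zero_mul, zero_mul]
  · rw [Fintype.sum_bool] at hm ⊢
    congr 2
    rw [hr_true, bconv]
    field_simp
    ring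

/-- Mrs. Gerber's Lemma application: with `X₁` binary, `(X₂,U)` discrete
with finite alphabet `S`, and `Y = X₁ ⊕ W`, `W ~ Bern(p)` independent of `(X₁,X₂,U)`,
one has `H(Y|X₂,U) ≥ h₂( h₂⁻¹(H(X₁|X₂,U)) ∗ p )`. -/
theorem stmt16 {S : Type*} [Fintype S] (p : ℝ) (hp : p ∈ Set.Ioo (0:ℝ) (1/2))
    (Q : Bool → S → ℝ)  -- joint pmf of (X₁,(X₂,U))
    (h0 : ∀ x1 s, 0 ≤ Q x1 s) (h1 : ∑ x1, ∑ s, Q x1 s = 1) :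
    -(∑ s, ∑ y : Bool, (∑ x1, Q x1 s * bern p (xor x1 y)) *
        Real.logb 2 ((∑ x1, Q x1 s * bern p (xor x1 y)) / (∑ x1, Q x1 s))) ≥
      h2 (bconv
        (h2inv (-(∑ s, ∑ x1, Q x1 s * Real.logb 2 (Q x1 s / (∑ x1', Q x1' s)))))
        p) := by
  set m : S → ℝ := fun s => ∑ x1, Q x1 s
  set α : S → ℝ := fun s => Q true s / m s
  have hm₀ : ∀ s, 0 ≤ m s := fun s => sum_nonneg fun x1 _ => h0 x1 s
  have hm₁ : ∑ s, m s = 1 := by rw [sum_comm]; exact h1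
  have hα : ∀ s, α s ∈ Icc (0:ℝ) 1 := fun s =>
    ⟨div_nonneg (h0 true s) (hm₀ s),
      div_le_one_of_le₀ (single_le_sum (fun x1 _ => h0 x1 s) (mem_univ true)) (hm₀ s)⟩
  have hX : -(∑ s, ∑ x1, Q x1 s * Real.logb 2 (Q x1 s / ∑ x1', Q x1' s)) =
      ∑ s, m s * h2 (α s) := by
    rw [← sum_neg_distrib]
    exact sum_congr rfl fun s _ => neg_sum_mul_logb_div_sum (Q · s)
  have hY : -(∑ s, ∑ y : Bool, (∑ x1, Q x1 s * bern p (xor x1 y)) *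
        Real.logb 2 ((∑ x1, Q x1 s * bern p (xor x1 y)) / ∑ x1, Q x1 s)) =
      ∑ s, m s * h2 (bconv (α s) p) := by
    rw [← sum_neg_distrib]
    exact sum_congr rfl fun s _ => neg_sum_mul_logb_xor_bern (Q · s) p
  rw [hX, hY, ge_iff_le]
  calc h2 (bconv (h2inv (∑ s, m s * h2 (α s))) p)
      ≤ ∑ s, m s * h2 (bconv (h2inv (h2 (α s))) p) :=
        (convexOn_h2_bconv_h2inv hp.1.le hp.2.le).map_sum_le (fun s _ => hm₀ s) hm₁
          fun s _ => ⟨h2_nonneg (hα s).1 (hα s).2, h2_le_one _⟩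
    _ = ∑ s, m s * h2 (bconv (α s) p) :=
        sum_congr rfl fun s _ => by rw [h2_bconv_h2inv_h2 (hα s)]
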